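/- arXiv:2310.09677 — 4 statements merged into one kernel-verified Lean document; each statement's English description precedes it below -/
import Mathlib

section
/- Let Λ be an m×n real matrix, R a p×n real matrix, S a q×m real matrix and Q a k×n real matrix, with ker R ∩ ker(S Λ) = {0}. Fix ε > 0, η > 0, y ∈ ℝᵐ, and let K = {f ∈ ℝⁿ : ‖R f‖ ≤ ε and ‖S (y − Λ f)‖ ≤ η}. Let c, d ≥ 0 and t ∈ ℝ satisfy the feasibility constraints: c RᵀR + d Λᵀ Sᵀ S Λ − QᵀQ is positive semidefinite, and the (n+1)×(n+1) block matrix [[c RᵀR + d Λᵀ Sᵀ S Λ, d Λᵀ Sᵀ S y], [d yᵀ Sᵀ S Λ, t]] is positive semidefinite. If f₀ ∈ ℝⁿ satisfies the normal equation c RᵀR f₀ + d Λᵀ Sᵀ S (Λ f₀ − y) = 0 (equivalently, f₀ minimizes f ↦ c ‖R f‖² + d ‖S(y − Λ f)‖²), then sup_{f ∈ K} ‖Q f − Q f₀‖² ≤ c ε² + d η² − d ‖S y‖² + t. -/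
/-!
Put `A = c RᵀR + d ΛᵀSᵀSΛ`, `b = d ΛᵀSᵀS y` and `J f = fᵀAf - 2 fᵀb`. The normal equation says
`A f₀ = b`, so `J f - J f₀ = (f - f₀)ᵀA(f - f₀)`, which bounds `‖Q (f - f₀)‖²` by the first
constraint. Testing the bordered matrix of the second constraint on `(-f₀, 1)` gives
`-J f₀ = f₀ᵀAf₀ ≤ t`. Finally `J f = c‖Rf‖² + d‖S(y - Λf)‖² - d‖Sy‖²`, which is at most
`cε² + dη² - d‖Sy‖²` on `K`.
-/

open Matrix

/-- Euclidean norm on `Fin k → ℝ`. -/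
noncomputable def eNorm {k : ℕ} (x : Fin k → ℝ) : ℝ := Real.sqrt (∑ i, x i ^ 2)

lemma eNorm_nonneg {k : ℕ} (x : Fin k → ℝ) : 0 ≤ eNorm x := Real.sqrt_nonneg _

lemma eNorm_sq {k : ℕ} (x : Fin k → ℝ) : eNorm x ^ 2 = x ⬝ᵥ x := by
  rw [eNorm, Real.sq_sqrt (Finset.sum_nonneg fun i _ => sq_nonneg _)]
  simp [dotProduct, sq]

namespace Matrix

variable {ι κ μ ν : Type*} [Fintype ι] [Fintype κ] [Fintype μ] [Fintype ν]

lemma dotProduct_transpose_mulVec' (M : Matrix κ ι ℝ) (u : ι → ℝ) (v : κ → ℝ) :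
    u ⬝ᵥ (Mᵀ *ᵥ v) = (M *ᵥ u) ⬝ᵥ v := by
  rw [dotProduct_mulVec, vecMul_transpose]

lemma PosSemidef.dotProduct_mulVec_le {A B : Matrix ι ι ℝ} (h : (A - B).PosSemidef)
    (v : ι → ℝ) : v ⬝ᵥ (B *ᵥ v) ≤ v ⬝ᵥ (A *ᵥ v) := by
  have := h.dotProduct_mulVec_nonneg v
  rw [star_trivial, sub_mulVec, dotProduct_sub] at this
  linarith

def quadObjective (A : Matrix ι ι ℝ) (b x : ι → ℝ) : ℝ := x ⬝ᵥ (A *ᵥ x) - 2 * (x ⬝ᵥ b)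

lemma quadObjective_sub_quadObjective {A : Matrix ι ι ℝ} (hA : A.IsSymm) {b x₀ : ι → ℝ}
    (hx₀ : A *ᵥ x₀ = b) (x : ι → ℝ) :
    quadObjective A b x - quadObjective A b x₀ = (x - x₀) ⬝ᵥ (A *ᵥ (x - x₀)) := by
  have hsymm : x₀ ⬝ᵥ (A *ᵥ x) = x ⬝ᵥ (A *ᵥ x₀) := by
    conv_lhs => rw [← hA.eq]
    exact dotProduct_transpose_mulVec A x₀ x
  subst hx₀
  simp only [quadObjective, mulVec_sub, dotProduct_sub, sub_dotProduct, hsymm]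
  ring

lemma PosSemidef.quadObjective_add_nonneg {A : Matrix ι ι ℝ} {b : ι → ℝ} {t : ℝ}
    (h : (fromBlocks A (replicateCol Unit b) (replicateRow Unit b) (of fun _ _ => t)).PosSemidef)
    (x : ι → ℝ) : 0 ≤ quadObjective A b x + t := by
  have := h.dotProduct_mulVec_nonneg (Sum.elim (-x) fun _ => 1)
  simp only [fromBlocks_mulVec, star_trivial, Sum.elim_comp_inl, Sum.elim_comp_inr,
    sumElim_dotProduct_sumElim] at this
  simp only [quadObjective, dotProduct, mulVec, replicateCol, replicateRow, of_apply,
    Pi.neg_apply, Pi.add_apply, neg_mul, Finset.sum_neg_distrib, mul_one, one_mul,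
    Finset.univ_unique, Finset.sum_singleton, mul_add, mul_neg, Finset.sum_add_distrib] at this ⊢
  simp only [mul_comm (b _)] at this
  linarith

variable (Λ : Matrix μ ι ℝ) (R : Matrix κ ι ℝ) (S : Matrix ν μ ℝ) (c d : ℝ) (y : μ → ℝ)

variable {Λ R S c d y} in
lemma mulVec_eq_of_normal_equation {f₀ : ι → ℝ}
    (hf₀ : c • ((Rᵀ * R) *ᵥ f₀) + d • ((Λᵀ * Sᵀ * S) *ᵥ (Λ *ᵥ f₀ - y)) = 0) :
    (c • (Rᵀ * R) + d • (Λᵀ * Sᵀ * S * Λ)) *ᵥ f₀ = d • ((Λᵀ * Sᵀ * S) *ᵥ y) := by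
  rw [add_mulVec, smul_mulVec, smul_mulVec, ← mulVec_mulVec f₀ (Λᵀ * Sᵀ * S) Λ]
  rw [mulVec_sub] at hf₀
  linear_combination (norm := module) hf₀

lemma quadObjective_eq_misfit (f : ι → ℝ) :
    quadObjective (c • (Rᵀ * R) + d • (Λᵀ * Sᵀ * S * Λ)) (d • ((Λᵀ * Sᵀ * S) *ᵥ y)) f
      = c * ((R *ᵥ f) ⬝ᵥ (R *ᵥ f)) + d * ((S *ᵥ (y - Λ *ᵥ f)) ⬝ᵥ (S *ᵥ (y - Λ *ᵥ f)))
        - d * ((S *ᵥ y) ⬝ᵥ (S *ᵥ y)) := by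
  simp only [quadObjective, add_mulVec, smul_mulVec, ← mulVec_mulVec, dotProduct_add,
    dotProduct_smul, smul_eq_mul, dotProduct_transpose_mulVec', mulVec_sub, dotProduct_sub,
    sub_dotProduct, dotProduct_comm (S *ᵥ y) (S *ᵥ Λ *ᵥ f)]
  ring

end Matrix

theorem sup_error_le_SDP_value_general {m n p q k : ℕ}
    (Λ : Matrix (Fin m) (Fin n) ℝ) (R : Matrix (Fin p) (Fin n) ℝ)
    (S : Matrix (Fin q) (Fin m) ℝ) (Q : Matrix (Fin k) (Fin n) ℝ)
    (ε η : ℝ) (y : Fin m → ℝ)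
    (c d t : ℝ) (hc : 0 ≤ c) (hd : 0 ≤ d)
    (hfeas1 : (c • (Rᵀ * R) + d • (Λᵀ * Sᵀ * S * Λ) - Qᵀ * Q).PosSemidef)
    (hfeas2 : (Matrix.fromBlocks (c • (Rᵀ * R) + d • (Λᵀ * Sᵀ * S * Λ))
        (Matrix.replicateCol Unit (d • ((Λᵀ * Sᵀ * S) *ᵥ y)))
        (Matrix.replicateRow Unit (d • ((Λᵀ * Sᵀ * S) *ᵥ y)))
        (Matrix.of fun _ _ => t)).PosSemidef)
    (f₀ : Fin n → ℝ)
    (hf₀ : c • ((Rᵀ * R) *ᵥ f₀) + d • ((Λᵀ * Sᵀ * S) *ᵥ (Λ *ᵥ f₀ - y)) = 0) :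
    ∀ f : Fin n → ℝ, eNorm (R *ᵥ f) ≤ ε → eNorm (S *ᵥ (y - Λ *ᵥ f)) ≤ η →
      eNorm (Q *ᵥ f - Q *ᵥ f₀) ^ 2 ≤
        c * ε ^ 2 + d * η ^ 2 - d * eNorm (S *ᵥ y) ^ 2 + t := by
  intro f hRf hSf
  set A := c • (Rᵀ * R) + d • (Λᵀ * Sᵀ * S * Λ)
  set b := d • ((Λᵀ * Sᵀ * S) *ᵥ y)
  have hA : A.IsSymm :=
    isHermitian_iff_isSymm.mp (isHermitian_fromBlocks_iff.mp hfeas2.isHermitian).1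
  have hf₀A : A *ᵥ f₀ = b := mulVec_eq_of_normal_equation hf₀
  calc eNorm (Q *ᵥ f - Q *ᵥ f₀) ^ 2 = (f - f₀) ⬝ᵥ ((Qᵀ * Q) *ᵥ (f - f₀)) := by
        rw [← mulVec_sub, eNorm_sq, ← mulVec_mulVec, dotProduct_transpose_mulVec']
    _ ≤ (f - f₀) ⬝ᵥ (A *ᵥ (f - f₀)) := hfeas1.dotProduct_mulVec_le _
    _ = quadObjective A b f - quadObjective A b f₀ :=
        (quadObjective_sub_quadObjective hA hf₀A f).symm
    _ ≤ quadObjective A b f + t := by linarith [hfeas2.quadObjective_add_nonneg f₀]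
    _ = c * eNorm (R *ᵥ f) ^ 2 + d * eNorm (S *ᵥ (y - Λ *ᵥ f)) ^ 2
          - d * eNorm (S *ᵥ y) ^ 2 + t := by
        rw [quadObjective_eq_misfit, eNorm_sq, eNorm_sq, eNorm_sq]
    _ ≤ c * ε ^ 2 + d * η ^ 2 - d * eNorm (S *ᵥ y) ^ 2 + t := by
        gcongr
        exacts [eNorm_nonneg _, eNorm_nonneg _]

theorem sup_error_le_SDP_value {m n p q k : ℕ}
    (Λ : Matrix (Fin m) (Fin n) ℝ) (R : Matrix (Fin p) (Fin n) ℝ)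
    (S : Matrix (Fin q) (Fin m) ℝ) (Q : Matrix (Fin k) (Fin n) ℝ)
    (hker : ∀ f : Fin n → ℝ, R *ᵥ f = 0 → (S * Λ) *ᵥ f = 0 → f = 0)
    (ε η : ℝ) (hε : 0 < ε) (hη : 0 < η) (y : Fin m → ℝ)
    (c d t : ℝ) (hc : 0 ≤ c) (hd : 0 ≤ d)
    (hfeas1 : (c • (Rᵀ * R) + d • (Λᵀ * Sᵀ * S * Λ) - Qᵀ * Q).PosSemidef)
    (hfeas2 : (Matrix.fromBlocks (c • (Rᵀ * R) + d • (Λᵀ * Sᵀ * S * Λ))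
        (Matrix.replicateCol Unit (d • ((Λᵀ * Sᵀ * S) *ᵥ y)))
        (Matrix.replicateRow Unit (d • ((Λᵀ * Sᵀ * S) *ᵥ y)))
        (Matrix.of fun _ _ => t)).PosSemidef)
    (f₀ : Fin n → ℝ)
    (hf₀ : c • ((Rᵀ * R) *ᵥ f₀) + d • ((Λᵀ * Sᵀ * S) *ᵥ (Λ *ᵥ f₀ - y)) = 0) :
    ∀ f : Fin n → ℝ, eNorm (R *ᵥ f) ≤ ε → eNorm (S *ᵥ (y - Λ *ᵥ f)) ≤ η →
      eNorm (Q *ᵥ f - Q *ᵥ f₀) ^ 2 ≤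
        c * ε ^ 2 + d * η ^ 2 - d * eNorm (S *ᵥ y) ^ 2 + t :=
  sup_error_le_SDP_value_general Λ R S Q ε η y c d t hc hd hfeas1 hfeas2 f₀ hf₀
end

section
/- Let Λ be an m×n real matrix, R a p×n real matrix, S a q×m real matrix and Q a k×n real matrix, with ker R ∩ ker(S Λ) = {0}. Fix ε > 0, η > 0, y ∈ ℝᵐ, and assume the set K = {f ∈ ℝⁿ : ‖R f‖ ≤ ε and ‖S (y − Λ f)‖ ≤ η} is nonempty. Then for every c, d ≥ 0 and t ∈ ℝ such that c RᵀR + d Λᵀ Sᵀ S Λ − QᵀQ is positive semidefinite and the block matrix [[c RᵀR + d Λᵀ Sᵀ S Λ, d Λᵀ Sᵀ S y], [d yᵀ Sᵀ S Λ, t]] is positive semidefinite, the squared Chebyshev radius of the image Q(K) is bounded as (inf_{z ∈ ℝᵏ} sup_{f ∈ K} ‖Q f − z‖)² ≤ c ε² + d η² − d ‖S y‖² + t. -/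
/-!
Write `M = c RᵀR + d ΛᵀSᵀSΛ` and `b = d ΛᵀSᵀS y`. Positive semidefiniteness of the block matrix
`[[M, b], [bᵀ, t]]` forces `b` into the range of `M` (it is orthogonal to `ker M`), and for any
`x₀` with `M x₀ = b` it gives `bᵀx₀ ≤ t`. Taking `Q x₀` as the centre, for `f ∈ K`
`‖Q(f - x₀)‖² ≤ (f - x₀)ᵀM(f - x₀) = c‖Rf‖² + d‖S(y - Λf)‖² - d‖Sy‖² + bᵀx₀`,
which is at most `c ε² + d η² - d ‖Sy‖² + t`.
-/

open Matrix

namespace Matrix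

variable {ι : Type*} [Fintype ι]

theorem dotProduct_transpose_mul_mulVec {α κ ι' : Type*} [CommSemiring α] [Fintype κ]
    [Fintype ι'] (A : Matrix κ ι α) (B : Matrix κ ι' α) (v : ι → α) (w : ι' → α) :
    v ⬝ᵥ (Aᵀ * B) *ᵥ w = A *ᵥ v ⬝ᵥ B *ᵥ w := by
  rw [← mulVec_mulVec, dotProduct_transpose_mulVec, dotProduct_comm]

theorem IsHermitian.exists_mulVec_eq [DecidableEq ι] {M : Matrix ι ι ℝ} (hM : M.IsHermitian)
    {b : ι → ℝ} (hb : ∀ u, M *ᵥ u = 0 → b ⬝ᵥ u = 0) : ∃ x, M *ᵥ x = b := by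
  have hT := isSymmetric_toEuclideanLin_iff.mpr hM
  have hmem : WithLp.toLp 2 b ∈ LinearMap.range M.toEuclideanLin := by
    rw [← Submodule.orthogonal_orthogonal (LinearMap.range _), hT.orthogonal_range]
    intro u hu
    simpa [EuclideanSpace.inner_eq_star_dotProduct] using hb u.ofLp (congrArg WithLp.ofLp hu)
  obtain ⟨x, hx⟩ := hmem
  exact ⟨x.ofLp, congrArg WithLp.ofLp hx⟩

theorem dotProduct_mulVec_add_nonneg_of_posSemidef_fromBlocks {M : Matrix ι ι ℝ} {b : ι → ℝ}
    {t : ℝ} (h : (fromBlocks M (replicateCol Unit b) (replicateRow Unit b)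
      (of fun _ _ => t)).PosSemidef) (x : ι → ℝ) (s : ℝ) :
    0 ≤ x ⬝ᵥ M *ᵥ x + 2 * s * (b ⬝ᵥ x) + t * s ^ 2 := by
  have h := h.dotProduct_mulVec_nonneg (Sum.elim x fun _ => s)
  have hcol : replicateCol Unit b *ᵥ (fun _ => s) = s • b := by
    ext; simp [mulVec, dotProduct, mul_comm]
  have hrow : replicateRow Unit b *ᵥ x = fun _ => b ⬝ᵥ x := by
    ext; simp [mulVec]
  simp only [star_trivial, fromBlocks_mulVec, Sum.elim_comp_inl, Sum.elim_comp_inr,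
    sumElim_dotProduct_sumElim, hcol, hrow] at h
  have hunit (u v : Unit → ℝ) : u ⬝ᵥ v = u () * v () := Fintype.sum_unique _
  simp only [hunit, dotProduct_add, dotProduct_smul, dotProduct_comm x b, Pi.add_apply,
    mulVec, of_apply, smul_eq_mul] at h
  linear_combination h

theorem exists_mulVec_eq_dotProduct_le_of_posSemidef_fromBlocks [DecidableEq ι]
    {M : Matrix ι ι ℝ} {b : ι → ℝ} {t : ℝ} (h : (fromBlocks M (replicateCol Unit b)
      (replicateRow Unit b) (of fun _ _ => t)).PosSemidef) :
    ∃ x, M *ᵥ x = b ∧ b ⬝ᵥ x ≤ t := by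
  have hquad := dotProduct_mulVec_add_nonneg_of_posSemidef_fromBlocks h
  have hb : ∀ u, M *ᵥ u = 0 → b ⬝ᵥ u = 0 := by
    intro u hu
    by_contra hbu
    -- at `(a • u, 1)` the form is `2 * a * (b ⬝ᵥ u) + t`, which this `a` makes `-1`
    have := hquad ((-(t + 1) / (2 * (b ⬝ᵥ u))) • u) 1
    simp only [mulVec_smul, hu, smul_zero, dotProduct_zero, dotProduct_smul, smul_eq_mul] at this
    field_simp at this
    linarith
  obtain ⟨x, hx⟩ := (isHermitian_fromBlocks_iff.mp h.isHermitian).1.exists_mulVec_eq hb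
  refine ⟨x, hx, ?_⟩
  have := hquad x (-1)
  rw [hx, dotProduct_comm x b] at this
  linarith

theorem IsSymm.sub_dotProduct_mulVec_sub {M : Matrix ι ι ℝ} (hM : M.IsSymm)
    {x₀ b : ι → ℝ} (hx₀ : M *ᵥ x₀ = b) (v : ι → ℝ) :
    (v - x₀) ⬝ᵥ M *ᵥ (v - x₀) = v ⬝ᵥ M *ᵥ v - 2 * (b ⬝ᵥ v) + b ⬝ᵥ x₀ := by
  have hsymm : x₀ ⬝ᵥ M *ᵥ v = b ⬝ᵥ v := by
    rw [← hx₀, dotProduct_comm (M *ᵥ x₀), ← dotProduct_transpose_mulVec, hM.eq]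
  rw [mulVec_sub, dotProduct_sub, sub_dotProduct, sub_dotProduct, hsymm, hx₀,
    dotProduct_comm v b, dotProduct_comm x₀ b]
  ring

end Matrix

theorem eNorm_mulVec_sq_le_of_posSemidef_sub {ι : Type*} [Fintype ι] {k : ℕ}
    {M : Matrix ι ι ℝ} {Q : Matrix (Fin k) ι ℝ} (h : (M - Qᵀ * Q).PosSemidef) (v : ι → ℝ) :
    eNorm (Q *ᵥ v) ^ 2 ≤ v ⬝ᵥ M *ᵥ v := by
  have := h.dotProduct_mulVec_nonneg v
  rw [star_trivial, sub_mulVec, dotProduct_sub, dotProduct_transpose_mul_mulVec] at this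
  rw [eNorm_sq]
  linarith

theorem quadratic_eq_weighted_residuals {ι κ : Type*} [Fintype ι] [Fintype κ] {p q : ℕ}
    (R : Matrix (Fin p) ι ℝ) (S : Matrix (Fin q) κ ℝ) (Λ : Matrix κ ι ℝ) (y : κ → ℝ)
    (c d : ℝ) (f : ι → ℝ) :
    f ⬝ᵥ (c • (Rᵀ * R) + d • (Λᵀ * Sᵀ * S * Λ)) *ᵥ f - 2 * (d • ((Λᵀ * Sᵀ * S) *ᵥ y) ⬝ᵥ f) =
      c * eNorm (R *ᵥ f) ^ 2 + d * eNorm (S *ᵥ (y - Λ *ᵥ f)) ^ 2 - d * eNorm (S *ᵥ y) ^ 2 := by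
  have hSΛ : Λᵀ * Sᵀ = (S * Λ)ᵀ := (transpose_mul S Λ).symm
  have hS : f ⬝ᵥ (Λᵀ * Sᵀ * S * Λ) *ᵥ f = S *ᵥ (Λ *ᵥ f) ⬝ᵥ S *ᵥ (Λ *ᵥ f) := by
    rw [hSΛ, Matrix.mul_assoc, dotProduct_transpose_mul_mulVec, mulVec_mulVec]
  have hb : (Λᵀ * Sᵀ * S) *ᵥ y ⬝ᵥ f = S *ᵥ y ⬝ᵥ S *ᵥ (Λ *ᵥ f) := by
    rw [hSΛ, dotProduct_comm, dotProduct_transpose_mul_mulVec, mulVec_mulVec, dotProduct_comm]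
  simp only [add_mulVec, smul_mulVec, dotProduct_add, dotProduct_smul, smul_dotProduct,
    smul_eq_mul, dotProduct_transpose_mul_mulVec, hS, hb, eNorm_sq, mulVec_sub, sub_dotProduct,
    dotProduct_sub, dotProduct_comm (S *ᵥ (Λ *ᵥ f)) (S *ᵥ y)]
  ring

theorem iInf_iSup_eNorm_sub_sq_le {α : Type*} {k : ℕ} {K : Set α} (hK : K.Nonempty)
    (g : α → Fin k → ℝ) (z₀ : Fin k → ℝ) {A : ℝ} (h : ∀ f ∈ K, eNorm (g f - z₀) ^ 2 ≤ A) :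
    (⨅ z, ⨆ f : K, eNorm (g f - z)) ^ 2 ≤ A := by
  have : Nonempty K := hK.to_subtype
  have hsup_nonneg (z : Fin k → ℝ) : 0 ≤ ⨆ f : K, eNorm (g f - z) :=
    Real.iSup_nonneg fun _ => eNorm_nonneg _
  have hle : ⨅ z, ⨆ f : K, eNorm (g f - z) ≤ √A :=
    ciInf_le_of_le ⟨0, Set.forall_mem_range.2 hsup_nonneg⟩ z₀
      (ciSup_le fun f => (le_abs_self _).trans (Real.abs_le_sqrt (h f f.2)))
  obtain ⟨f, hf⟩ := hK
  calc (⨅ z, ⨆ f : K, eNorm (g f - z)) ^ 2 ≤ √A ^ 2 := by gcongr; exact le_ciInf hsup_nonneg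
    _ = A := Real.sq_sqrt ((sq_nonneg _).trans (h f hf))

theorem chebyshev_radius_sq_le_SDP_value_general {m n p q k : ℕ}
    (Λ : Matrix (Fin m) (Fin n) ℝ) (R : Matrix (Fin p) (Fin n) ℝ)
    (S : Matrix (Fin q) (Fin m) ℝ) (Q : Matrix (Fin k) (Fin n) ℝ)
    (ε η : ℝ) (y : Fin m → ℝ)
    (K : Set (Fin n → ℝ))
    (hK : K = {f : Fin n → ℝ | eNorm (R *ᵥ f) ≤ ε ∧ eNorm (S *ᵥ (y - Λ *ᵥ f)) ≤ η})
    (hKne : K.Nonempty) :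
    ∀ c d t : ℝ, 0 ≤ c → 0 ≤ d →
      (c • (Rᵀ * R) + d • (Λᵀ * Sᵀ * S * Λ) - Qᵀ * Q).PosSemidef →
      (Matrix.fromBlocks (c • (Rᵀ * R) + d • (Λᵀ * Sᵀ * S * Λ))
          (Matrix.replicateCol Unit (d • ((Λᵀ * Sᵀ * S) *ᵥ y)))
          (Matrix.replicateRow Unit (d • ((Λᵀ * Sᵀ * S) *ᵥ y)))
          (Matrix.of fun _ _ => t)).PosSemidef →
      (⨅ z : Fin k → ℝ, ⨆ f : K, eNorm (Q *ᵥ (f : Fin n → ℝ) - z)) ^ 2 ≤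
        c * ε ^ 2 + d * η ^ 2 - d * eNorm (S *ᵥ y) ^ 2 + t := by
  intro c d t hc hd hQ hblock
  set M := c • (Rᵀ * R) + d • (Λᵀ * Sᵀ * S * Λ)
  set b := d • ((Λᵀ * Sᵀ * S) *ᵥ y)
  have hM : M.IsSymm :=
    isHermitian_iff_isSymm.mp (isHermitian_fromBlocks_iff.mp hblock.isHermitian).1
  obtain ⟨x₀, hx₀, hbx₀⟩ := exists_mulVec_eq_dotProduct_le_of_posSemidef_fromBlocks hblock
  refine iInf_iSup_eNorm_sub_sq_le hKne (Q *ᵥ ·) (Q *ᵥ x₀) fun f hf => ?_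
  rw [hK] at hf
  calc eNorm (Q *ᵥ f - Q *ᵥ x₀) ^ 2 = eNorm (Q *ᵥ (f - x₀)) ^ 2 := by rw [mulVec_sub]
    _ ≤ (f - x₀) ⬝ᵥ M *ᵥ (f - x₀) := eNorm_mulVec_sq_le_of_posSemidef_sub hQ _
    _ = f ⬝ᵥ M *ᵥ f - 2 * (b ⬝ᵥ f) + b ⬝ᵥ x₀ := hM.sub_dotProduct_mulVec_sub hx₀ f
    _ = c * eNorm (R *ᵥ f) ^ 2 + d * eNorm (S *ᵥ (y - Λ *ᵥ f)) ^ 2 - d * eNorm (S *ᵥ y) ^ 2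
          + b ⬝ᵥ x₀ := by rw [← quadratic_eq_weighted_residuals]
    _ ≤ c * ε ^ 2 + d * η ^ 2 - d * eNorm (S *ᵥ y) ^ 2 + t := by
          gcongr
          exacts [eNorm_nonneg _, hf.1, eNorm_nonneg _, hf.2]

theorem chebyshev_radius_sq_le_SDP_value {m n p q k : ℕ}
    (Λ : Matrix (Fin m) (Fin n) ℝ) (R : Matrix (Fin p) (Fin n) ℝ)
    (S : Matrix (Fin q) (Fin m) ℝ) (Q : Matrix (Fin k) (Fin n) ℝ)
    (hker : ∀ f : Fin n → ℝ, R *ᵥ f = 0 → (S * Λ) *ᵥ f = 0 → f = 0)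
    (ε η : ℝ) (hε : 0 < ε) (hη : 0 < η) (y : Fin m → ℝ)
    (K : Set (Fin n → ℝ))
    (hK : K = {f : Fin n → ℝ | eNorm (R *ᵥ f) ≤ ε ∧ eNorm (S *ᵥ (y - Λ *ᵥ f)) ≤ η})
    (hKne : K.Nonempty) :
    ∀ c d t : ℝ, 0 ≤ c → 0 ≤ d →
      (c • (Rᵀ * R) + d • (Λᵀ * Sᵀ * S * Λ) - Qᵀ * Q).PosSemidef →
      (Matrix.fromBlocks (c • (Rᵀ * R) + d • (Λᵀ * Sᵀ * S * Λ))
          (Matrix.replicateCol Unit (d • ((Λᵀ * Sᵀ * S) *ᵥ y)))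
          (Matrix.replicateRow Unit (d • ((Λᵀ * Sᵀ * S) *ᵥ y)))
          (Matrix.of fun _ _ => t)).PosSemidef →
      (⨅ z : Fin k → ℝ, ⨆ f : K, eNorm (Q *ᵥ (f : Fin n → ℝ) - z)) ^ 2 ≤
        c * ε ^ 2 + d * η ^ 2 - d * eNorm (S *ᵥ y) ^ 2 + t :=
  chebyshev_radius_sq_le_SDP_value_general Λ R S Q ε η y K hK hKne
end

section
/- Let P be an n×n real symmetric matrix with P² = P, let Λ be an m×n real matrix with Λ Λᵀ = I_m, and suppose ker P ∩ ker Λ = {0}. Fix ε > 0, η > 0 and y ∈ ℝᵐ. Suppose there exist c♯, d♯ ≥ 0 and vectors f♯, h♯ ∈ ℝⁿ such that: (a) c♯ P + d♯ ΛᵀΛ − I_n is positive semidefinite; (b') c♯ P f♯ + d♯ Λᵀ(Λ f♯ − y) = 0 and (c♯ P + d♯ ΛᵀΛ) h♯ = h♯; (c) ⟨P f♯, h♯⟩ = 0 and ⟨Λᵀ(Λ f♯ − y), h♯⟩ = 0; (d) ‖P f♯ + P h♯‖² = ε² and ‖Λ f♯ − y + Λ h♯‖² = η². Then the optimal value of the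 semidefinite program — minimize c ε² + d η² − d ‖y‖² + t over c, d ≥ 0, t ∈ ℝ subject to c P + d ΛᵀΛ − I_n positive semidefinite and the block matrix [[c P + d ΛᵀΛ, d Λᵀ y], [d yᵀ Λ, t]] positive semidefinite — equals ‖h♯‖², and this value is attained at (c♯, d♯, t♯) with t♯ = d♯ ⟨Λ f♯, y⟩. -/
/-!
Write `A = c P + d ΛᵀΛ` and `b = d Λᵀ y`. Since `P` is an orthogonal projection, the objective
`c ε² + d η² - d ‖y‖² + t`, evaluated through (d), equals the quadratic form
`q(x) = xᵀ A x - 2 bᵀ x + t` at `x = f♯ + h♯`. By (c) the cross term `h♯ᵀ (A f♯ - b)` vanishes,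
so the objective is `q(f♯) + h♯ᵀ A h♯`. For feasible `(c, d, t)` the block condition says exactly
that `q ≥ 0`, and `A ⪰ I` gives `h♯ᵀ A h♯ ≥ ‖h♯‖²`. At `(c♯, d♯, t♯)` both inequalities are
equalities: (b') says `A f♯ = b`, which makes `q(f♯) = 0` and the block matrix the Gram matrix
`[I | f♯]ᵀ A [I | f♯]`, and `A h♯ = h♯`.
-/

open Matrix

/-- Euclidean inner product on `Fin k → ℝ`. -/
def eInner {k : ℕ} (x y : Fin k → ℝ) : ℝ := ∑ i, x i * y i

lemma isSymm_smul_add_smul {ι κ : Type*} [Fintype κ] {P : Matrix ι ι ℝ} (hP : P.IsSymm)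
    (Λ : Matrix κ ι ℝ) (c d : ℝ) : (c • P + d • (Λᵀ * Λ)).IsSymm :=
  (hP.smul c).add ((by simp [IsSymm, transpose_mul] : (Λᵀ * Λ).IsSymm).smul d)

section

variable {ι κ : Type*} [Fintype ι] [Fintype κ]

/-- The quadratic form of the block matrix `[[A, b], [bᵀ, t]]` at the vector `(x, -1)`. -/
def affineQuadForm (A : Matrix ι ι ℝ) (b : ι → ℝ) (t : ℝ) (x : ι → ℝ) : ℝ :=
  x ⬝ᵥ (A *ᵥ x) - 2 * (b ⬝ᵥ x) + t

lemma affineQuadForm_nonneg_of_fromBlocks_posSemidef {A : Matrix ι ι ℝ} {b : ι → ℝ} {t : ℝ}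
    (h : (fromBlocks A (replicateCol Unit b) (replicateRow Unit b) (of fun _ _ => t)).PosSemidef)
    (x : ι → ℝ) : 0 ≤ affineQuadForm A b t x := by
  have hcol : replicateCol Unit b *ᵥ (fun _ => -1) = -b := by
    ext; simp [mulVec, dotProduct]
  have hlast : (fun _ => -1 : Unit → ℝ) ⬝ᵥ
      (replicateRow Unit b *ᵥ x + (of fun _ _ => t : Matrix Unit Unit ℝ) *ᵥ fun _ => -1) =
        -(b ⬝ᵥ x) + t := by
    simp [mulVec, dotProduct, add_comm]
  have := h.dotProduct_mulVec_nonneg (Sum.elim x fun _ => -1)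
  rw [star_trivial, fromBlocks_mulVec, Sum.elim_comp_inl, Sum.elim_comp_inr,
    sumElim_dotProduct_sumElim, hlast, hcol, dotProduct_add, dotProduct_neg,
    dotProduct_comm x b] at this
  rw [affineQuadForm]
  linarith

lemma fromBlocks_mulVec_posSemidef [DecidableEq ι] {A : Matrix ι ι ℝ} (hA : A.PosSemidef)
    (f : ι → ℝ) :
    (fromBlocks A (replicateCol Unit (A *ᵥ f)) (replicateRow Unit (A *ᵥ f))
      (of fun _ _ => f ⬝ᵥ (A *ᵥ f))).PosSemidef := by
  have hrow : replicateRow Unit f * A = replicateRow Unit (A *ᵥ f) := by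
    rw [← replicateRow_vecMul, ← mulVec_transpose, ← conjTranspose_eq_transpose_of_trivial,
      hA.1.eq]
  have hgram : (fromCols 1 (replicateCol Unit f))ᴴ * A * fromCols 1 (replicateCol Unit f) =
      fromBlocks A (replicateCol Unit (A *ᵥ f)) (replicateRow Unit (A *ᵥ f))
        (of fun _ _ => f ⬝ᵥ (A *ᵥ f)) := by
    rw [conjTranspose_fromCols_eq_fromRows_conjTranspose, fromRows_mul, fromRows_mul_fromCols,
      conjTranspose_replicateCol, star_trivial, hrow, replicateRow_mul_replicateCol,
      dotProduct_comm, ← replicateCol_mulVec, conjTranspose_one, Matrix.one_mul, Matrix.mul_one,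
      Matrix.mul_one]
  exact hgram ▸ hA.conjTranspose_mul_mul_same _

lemma affineQuadForm_add {A : Matrix ι ι ℝ} (hA : A.IsSymm) (b : ι → ℝ) (t : ℝ) (x h : ι → ℝ) :
    affineQuadForm A b t (x + h) =
      affineQuadForm A b t x + h ⬝ᵥ (A *ᵥ h) + 2 * (h ⬝ᵥ (A *ᵥ x - b)) := by
  have hsymm : x ⬝ᵥ (A *ᵥ h) = h ⬝ᵥ (A *ᵥ x) := by
    rw [dotProduct_mulVec, ← mulVec_transpose, hA.eq, dotProduct_comm]
  simp only [affineQuadForm, mulVec_add, add_dotProduct, dotProduct_add, dotProduct_sub,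
    dotProduct_comm b, hsymm]
  ring

lemma dotProduct_mulVec_eq_mulVec_dotProduct_mulVec {P : Matrix ι ι ℝ} (hP : P.IsSymm)
    (hPP : IsIdempotentElem P) (x : ι → ℝ) : x ⬝ᵥ (P *ᵥ x) = (P *ᵥ x) ⬝ᵥ (P *ᵥ x) := by
  rw [dotProduct_mulVec (P *ᵥ x), ← mulVec_transpose, hP.eq, mulVec_mulVec, hPP.eq,
    dotProduct_comm]

variable (P : Matrix ι ι ℝ) (Λ : Matrix κ ι ℝ)

lemma smul_add_smul_mulVec_sub_smul (c d : ℝ) (x : ι → ℝ) (y : κ → ℝ) :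
    (c • P + d • (Λᵀ * Λ)) *ᵥ x - d • (Λᵀ *ᵥ y) = c • (P *ᵥ x) + d • (Λᵀ *ᵥ (Λ *ᵥ x - y)) := by
  rw [add_mulVec, smul_mulVec, smul_mulVec, ← mulVec_mulVec, mulVec_sub, smul_sub]
  abel

variable {P}

lemma penalty_eq_affineQuadForm (hP : P.IsSymm) (hPP : IsIdempotentElem P) (c d t : ℝ)
    (x : ι → ℝ) (y : κ → ℝ) :
    c * ((P *ᵥ x) ⬝ᵥ (P *ᵥ x)) + d * ((Λ *ᵥ x - y) ⬝ᵥ (Λ *ᵥ x - y)) - d * (y ⬝ᵥ y) + t =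
      affineQuadForm (c • P + d • (Λᵀ * Λ)) (d • (Λᵀ *ᵥ y)) t x := by
  have hΛ : (Λᵀ *ᵥ y) ⬝ᵥ x = y ⬝ᵥ (Λ *ᵥ x) := by
    rw [dotProduct_comm, dotProduct_mulVec, vecMul_transpose, dotProduct_comm]
  simp only [affineQuadForm, add_mulVec, smul_mulVec, dotProduct_add, dotProduct_smul,
    smul_dotProduct, smul_eq_mul, ← dotProduct_mulVec_eq_mulVec_dotProduct_mulVec hP hPP,
    ← mulVec_mulVec, dotProduct_mulVec x Λᵀ, vecMul_transpose, hΛ, sub_dotProduct,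
    dotProduct_sub, dotProduct_comm (Λ *ᵥ x) y]
  ring

lemma penalty_eq_affineQuadForm_add_dotProduct_mulVec (hP : P.IsSymm) (hPP : IsIdempotentElem P)
    (c d t : ℝ) {f h : ι → ℝ} {y : κ → ℝ} (hPf : (P *ᵥ f) ⬝ᵥ h = 0)
    (hΛf : (Λᵀ *ᵥ (Λ *ᵥ f - y)) ⬝ᵥ h = 0) :
    c * ((P *ᵥ f + P *ᵥ h) ⬝ᵥ (P *ᵥ f + P *ᵥ h)) +
        d * ((Λ *ᵥ f - y + Λ *ᵥ h) ⬝ᵥ (Λ *ᵥ f - y + Λ *ᵥ h)) - d * (y ⬝ᵥ y) + t =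
      affineQuadForm (c • P + d • (Λᵀ * Λ)) (d • (Λᵀ *ᵥ y)) t f +
        h ⬝ᵥ ((c • P + d • (Λᵀ * Λ)) *ᵥ h) := by
  have hcross : h ⬝ᵥ ((c • P + d • (Λᵀ * Λ)) *ᵥ f - d • (Λᵀ *ᵥ y)) = 0 := by
    rw [smul_add_smul_mulVec_sub_smul, dotProduct_add, dotProduct_smul, dotProduct_smul,
      dotProduct_comm h, dotProduct_comm h, hPf, hΛf, smul_zero, smul_zero, add_zero]
  have hres : Λ *ᵥ f - y + Λ *ᵥ h = Λ *ᵥ (f + h) - y := by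
    rw [mulVec_add]; abel
  rw [← mulVec_add, hres, penalty_eq_affineQuadForm Λ hP hPP,
    affineQuadForm_add (isSymm_smul_add_smul hP Λ c d), hcross, mul_zero, add_zero]

end

lemma dotProduct_self_le_of_posSemidef_sub_one {ι : Type*} [Fintype ι] [DecidableEq ι]
    {A : Matrix ι ι ℝ} (hA : (A - 1).PosSemidef) (x : ι → ℝ) : x ⬝ᵥ x ≤ x ⬝ᵥ (A *ᵥ x) := by
  have := hA.dotProduct_mulVec_nonneg x
  rwa [star_trivial, sub_mulVec, one_mulVec, dotProduct_sub, sub_nonneg] at this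

theorem SDP_value_eq_normSq_and_attained_general {n m : ℕ}
    (P : Matrix (Fin n) (Fin n) ℝ) (Λ : Matrix (Fin m) (Fin n) ℝ)
    (hPsymm : P.IsSymm) (hPproj : P * P = P)
    (ε η : ℝ) (y : Fin m → ℝ)
    (cs ds : ℝ) (hcs : 0 ≤ cs) (hds : 0 ≤ ds) (fs hs : Fin n → ℝ)
    -- (a)
    (ha : (cs • P + ds • (Λᵀ * Λ) - 1).PosSemidef)
    -- (b')
    (hb1 : cs • (P *ᵥ fs) + ds • (Λᵀ *ᵥ (Λ *ᵥ fs - y)) = 0)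
    (hb2 : (cs • P + ds • (Λᵀ * Λ)) *ᵥ hs = hs)
    -- (c)
    (hc1 : eInner (P *ᵥ fs) hs = 0)
    (hc2 : eInner (Λᵀ *ᵥ (Λ *ᵥ fs - y)) hs = 0)
    -- (d)
    (hd1 : eNorm (P *ᵥ fs + P *ᵥ hs) ^ 2 = ε ^ 2)
    (hd2 : eNorm (Λ *ᵥ fs - y + Λ *ᵥ hs) ^ 2 = η ^ 2)
    -- the SDP feasibility predicate
    (Feas : ℝ → ℝ → ℝ → Prop)
    (hFeas : ∀ c d t : ℝ, Feas c d t ↔ (0 ≤ c ∧ 0 ≤ d ∧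
      (c • P + d • (Λᵀ * Λ) - 1).PosSemidef ∧
      (Matrix.fromBlocks (c • P + d • (Λᵀ * Λ))
          (Matrix.replicateCol Unit (d • (Λᵀ *ᵥ y)))
          (Matrix.replicateRow Unit (d • (Λᵀ *ᵥ y)))
          (Matrix.of fun _ _ => t)).PosSemidef)) :
    sInf {v : ℝ | ∃ c d t : ℝ, Feas c d t ∧
        v = c * ε ^ 2 + d * η ^ 2 - d * eNorm y ^ 2 + t} = eNorm hs ^ 2 ∧
    Feas cs ds (ds * eInner (Λ *ᵥ fs) y) ∧
    cs * ε ^ 2 + ds * η ^ 2 - ds * eNorm y ^ 2 + ds * eInner (Λ *ᵥ fs) y =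
      eNorm hs ^ 2 := by
  have hobj : ∀ c d t : ℝ, c * ε ^ 2 + d * η ^ 2 - d * eNorm y ^ 2 + t =
      affineQuadForm (c • P + d • (Λᵀ * Λ)) (d • (Λᵀ *ᵥ y)) t fs +
        hs ⬝ᵥ ((c • P + d • (Λᵀ * Λ)) *ᵥ hs) := by
    intro c d t
    rw [← hd1, ← hd2, eNorm_sq, eNorm_sq, eNorm_sq]
    exact penalty_eq_affineQuadForm_add_dotProduct_mulVec Λ hPsymm hPproj c d t hc1 hc2
  have hAf : (cs • P + ds • (Λᵀ * Λ)) *ᵥ fs = ds • (Λᵀ *ᵥ y) :=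
    sub_eq_zero.mp ((smul_add_smul_mulVec_sub_smul P Λ cs ds fs y).trans hb1)
  have htf : fs ⬝ᵥ ((cs • P + ds • (Λᵀ * Λ)) *ᵥ fs) = ds * eInner (Λ *ᵥ fs) y := by
    rw [hAf, dotProduct_smul, dotProduct_mulVec, vecMul_transpose, smul_eq_mul]
    rfl
  have hfeas : Feas cs ds (ds * eInner (Λ *ᵥ fs) y) := by
    have hA : (cs • P + ds • (Λᵀ * Λ)).PosSemidef := by
      simpa using ha.add PosSemidef.one
    have hblock := fromBlocks_mulVec_posSemidef hA fs
    rw [htf, hAf] at hblock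
    exact (hFeas _ _ _).mpr ⟨hcs, hds, ha, hblock⟩
  have hval : cs * ε ^ 2 + ds * η ^ 2 - ds * eNorm y ^ 2 + ds * eInner (Λ *ᵥ fs) y =
      eNorm hs ^ 2 := by
    rw [hobj, affineQuadForm, hb2, eNorm_sq, dotProduct_comm _ fs, ← hAf, htf]
    ring
  have hlower : ∀ c d t, Feas c d t →
      eNorm hs ^ 2 ≤ c * ε ^ 2 + d * η ^ 2 - d * eNorm y ^ 2 + t := by
    intro c d t hcdt
    obtain ⟨-, -, hA, hblock⟩ := (hFeas c d t).mp hcdt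
    rw [hobj, eNorm_sq]
    linarith [affineQuadForm_nonneg_of_fromBlocks_posSemidef hblock fs,
      dotProduct_self_le_of_posSemidef_sub_one hA hs]
  refine ⟨IsLeast.csInf_eq ⟨⟨cs, ds, _, hfeas, hval.symm⟩, ?_⟩, hfeas, hval⟩
  rintro v ⟨c, d, t, hcdt, rfl⟩
  exact hlower c d t hcdt

theorem SDP_value_eq_normSq_and_attained {n m : ℕ}
    (P : Matrix (Fin n) (Fin n) ℝ) (Λ : Matrix (Fin m) (Fin n) ℝ)
    (hPsymm : P.IsSymm) (hPproj : P * P = P) (hΛ : Λ * Λᵀ = 1)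
    (hker : ∀ f : Fin n → ℝ, P *ᵥ f = 0 → Λ *ᵥ f = 0 → f = 0)
    (ε η : ℝ) (hε : 0 < ε) (hη : 0 < η) (y : Fin m → ℝ)
    (cs ds : ℝ) (hcs : 0 ≤ cs) (hds : 0 ≤ ds) (fs hs : Fin n → ℝ)
    -- (a)
    (ha : (cs • P + ds • (Λᵀ * Λ) - 1).PosSemidef)
    -- (b')
    (hb1 : cs • (P *ᵥ fs) + ds • (Λᵀ *ᵥ (Λ *ᵥ fs - y)) = 0)
    (hb2 : (cs • P + ds • (Λᵀ * Λ)) *ᵥ hs = hs)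
    -- (c)
    (hc1 : eInner (P *ᵥ fs) hs = 0)
    (hc2 : eInner (Λᵀ *ᵥ (Λ *ᵥ fs - y)) hs = 0)
    -- (d)
    (hd1 : eNorm (P *ᵥ fs + P *ᵥ hs) ^ 2 = ε ^ 2)
    (hd2 : eNorm (Λ *ᵥ fs - y + Λ *ᵥ hs) ^ 2 = η ^ 2)
    -- the SDP feasibility predicate
    (Feas : ℝ → ℝ → ℝ → Prop)
    (hFeas : ∀ c d t : ℝ, Feas c d t ↔ (0 ≤ c ∧ 0 ≤ d ∧
      (c • P + d • (Λᵀ * Λ) - 1).PosSemidef ∧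
      (Matrix.fromBlocks (c • P + d • (Λᵀ * Λ))
          (Matrix.replicateCol Unit (d • (Λᵀ *ᵥ y)))
          (Matrix.replicateRow Unit (d • (Λᵀ *ᵥ y)))
          (Matrix.of fun _ _ => t)).PosSemidef)) :
    sInf {v : ℝ | ∃ c d t : ℝ, Feas c d t ∧
        v = c * ε ^ 2 + d * η ^ 2 - d * eNorm y ^ 2 + t} = eNorm hs ^ 2 ∧
    Feas cs ds (ds * eInner (Λ *ᵥ fs) y) ∧
    cs * ε ^ 2 + ds * η ^ 2 - ds * eNorm y ^ 2 + ds * eInner (Λ *ᵥ fs) y =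
      eNorm hs ^ 2 :=
  SDP_value_eq_normSq_and_attained_general P Λ hPsymm hPproj ε η y cs ds hcs hds fs hs ha hb1 hb2
    hc1 hc2 hd1 hd2 Feas hFeas
end

section
/- Let P be an n×n real symmetric matrix with P² = P, let Λ be an m×n real matrix with Λ Λᵀ = I_m, and suppose ker P ∩ ker Λ = {0}. Fix ε > 0, η > 0 and y ∈ ℝᵐ, and set K = {f ∈ ℝⁿ : ‖P f‖ ≤ ε and ‖y − Λ f‖ ≤ η}. Suppose f♯ ∈ ℝⁿ and there exist c♯, d♯ ≥ 0 and h♯ ∈ ℝⁿ such that: (a) c♯ P + d♯ ΛᵀΛ − I_n is positive semidefinite; (b) c♯ P f♯ + d♯ Λᵀ(Λ f♯ − y) + (c♯ P + d♯ ΛᵀΛ) h♯ = h♯; (c) ⟨P f♯, h♯⟩ = 0 and ⟨Λᵀ(Λ f♯ − y), h♯⟩ = 0; (d) ‖P f♯ + P h♯‖² = ε² and ‖Λ f♯ − y + Λ h♯‖² = η². Then f♯ is a Chebyshev center of K: for every z ∈ ℝⁿ, sup_{f ∈ K} ‖f − f♯‖ ≤ sup_{f ∈ K} ‖f − z‖.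 -/
open Matrix

/-!
Put u = f♯ + h♯. By (a) the Lagrangian L f = ‖f - f♯‖² - c♯ ‖P f‖² - d♯ ‖Λ f - y‖² is concave,
and (b) says that u is a critical point of L, so L f ≤ L u. On K the constraints give
L f ≥ ‖f - f♯‖² - c♯ ε² - d♯ η², while (d) gives L u = ‖h♯‖² - c♯ ε² - d♯ η²: thus K lies in the
closed ball of radius ‖h♯‖ about f♯. By (c) and (d) both f♯ ± h♯ lie in K, and by the
parallelogram law one of them is at distance at least ‖h♯‖ from any z.
-/

open scoped InnerProductSpace
open WithLp (toLp)

section Lagrangian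

variable {E F G : Type*} [NormedAddCommGroup E] [InnerProductSpace ℝ E]
  [NormedAddCommGroup F] [InnerProductSpace ℝ F] [NormedAddCommGroup G] [InnerProductSpace ℝ G]

theorem norm_le_max_norm_add_norm_sub (a h : E) : ‖h‖ ≤ max ‖a + h‖ ‖a - h‖ := by
  by_contra! hlt
  obtain ⟨hadd, hsub⟩ := max_lt_iff.1 hlt
  have := parallelogram_law_with_norm ℝ a h
  nlinarith [norm_nonneg (a + h), norm_nonneg (a - h)]

theorem ciSup_norm_sub_le_ciSup_norm_sub {ι : Type*} (v : ι → E) {c h : E}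
    (hv : ∀ i, ‖v i - c‖ ≤ ‖h‖) (hadd : ∃ i, v i = c + h) (hsub : ∃ i, v i = c - h) (z : E) :
    ⨆ i, ‖v i - c‖ ≤ ⨆ i, ‖v i - z‖ := by
  obtain ⟨i, hi⟩ := hadd
  obtain ⟨j, hj⟩ := hsub
  have : Nonempty ι := ⟨i⟩
  have hbdd : BddAbove (Set.range fun i ↦ ‖v i - z‖) :=
    ⟨‖h‖ + ‖c - z‖, Set.forall_mem_range.2 fun i ↦
      (norm_sub_le_norm_sub_add_norm_sub _ c _).trans (by gcongr; exact hv i)⟩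
  calc ⨆ i, ‖v i - c‖ ≤ ‖h‖ := ciSup_le hv
    _ ≤ max ‖c - z + h‖ ‖c - z - h‖ := norm_le_max_norm_add_norm_sub _ _
    _ ≤ ⨆ i, ‖v i - z‖ := max_le
        (by convert le_ciSup hbdd i using 2; rw [hi]; abel)
        (by convert le_ciSup hbdd j using 2; rw [hj]; abel)

theorem norm_map_sub_sub_eq_norm_map_add_sub (T : E →ₗ[ℝ] F) {x h : E} {w : F}
    (hT : ⟪T x - w, T h⟫_ℝ = 0) : ‖T (x - h) - w‖ = ‖T (x + h) - w‖ := by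
  rw [map_sub, map_add, sub_right_comm, add_sub_right_comm,
    norm_sub_eq_norm_add ((real_inner_comm _ _).trans hT)]

def lagrangian (A : E →ₗ[ℝ] F) (B : E →ₗ[ℝ] G) (y : G) (c d : ℝ) (x₀ f : E) : ℝ :=
  ‖f - x₀‖ ^ 2 - c * ‖A f‖ ^ 2 - d * ‖B f - y‖ ^ 2

variable (A : E →ₗ[ℝ] F) (B : E →ₗ[ℝ] G) (y : G) {c d : ℝ} {x₀ h : E}

theorem lagrangian_le_lagrangian_add
    (hcoer : ∀ g, ‖g‖ ^ 2 ≤ c * ‖A g‖ ^ 2 + d * ‖B g‖ ^ 2)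
    (hstat : ∀ g, ⟪h, g⟫_ℝ = c * ⟪A (x₀ + h), A g⟫_ℝ + d * ⟪B (x₀ + h) - y, B g⟫_ℝ) (f : E) :
    lagrangian A B y c d x₀ f ≤ lagrangian A B y c d x₀ (x₀ + h) := by
  obtain ⟨g, rfl⟩ : ∃ g, f = x₀ + h + g := ⟨f - (x₀ + h), by abel⟩
  have hf : x₀ + h + g - x₀ = h + g := by abel
  have hBf : B (x₀ + h + g) - y = (B (x₀ + h) - y) + B g := by rw [map_add]; abel
  simp only [lagrangian, hf, hBf, map_add A (x₀ + h) g, add_sub_cancel_left,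
    norm_add_sq_real]
  linarith [hcoer g, hstat g]

theorem norm_sub_le_of_stationary (hc : 0 ≤ c) (hd : 0 ≤ d)
    (hcoer : ∀ g, ‖g‖ ^ 2 ≤ c * ‖A g‖ ^ 2 + d * ‖B g‖ ^ 2)
    (hstat : ∀ g, ⟪h, g⟫_ℝ = c * ⟪A (x₀ + h), A g⟫_ℝ + d * ⟪B (x₀ + h) - y, B g⟫_ℝ) {f : E}
    (hfA : ‖A f‖ ≤ ‖A (x₀ + h)‖) (hfB : ‖B f - y‖ ≤ ‖B (x₀ + h) - y‖) :
    ‖f - x₀‖ ≤ ‖h‖ := by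
  have hL := lagrangian_le_lagrangian_add A B y hcoer hstat f
  simp only [lagrangian, add_sub_cancel_left] at hL
  have hA : c * ‖A f‖ ^ 2 ≤ c * ‖A (x₀ + h)‖ ^ 2 := by gcongr
  have hB : d * ‖B f - y‖ ^ 2 ≤ d * ‖B (x₀ + h) - y‖ ^ 2 := by gcongr
  exact (sq_le_sq₀ (norm_nonneg _) (norm_nonneg _)).1 (by linarith)

theorem ciSup_norm_sub_le_of_stationary (hc : 0 ≤ c) (hd : 0 ≤ d)
    (hcoer : ∀ g, ‖g‖ ^ 2 ≤ c * ‖A g‖ ^ 2 + d * ‖B g‖ ^ 2)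
    (hstat : ∀ g, ⟪h, g⟫_ℝ = c * ⟪A (x₀ + h), A g⟫_ℝ + d * ⟪B (x₀ + h) - y, B g⟫_ℝ)
    (hA : ⟪A x₀, A h⟫_ℝ = 0) (hB : ⟪B x₀ - y, B h⟫_ℝ = 0) {ι : Type*} (v : ι → E)
    (hv : ∀ i, ‖A (v i)‖ ≤ ‖A (x₀ + h)‖ ∧ ‖B (v i) - y‖ ≤ ‖B (x₀ + h) - y‖)
    (hv_surj : ∀ f, ‖A f‖ ≤ ‖A (x₀ + h)‖ → ‖B f - y‖ ≤ ‖B (x₀ + h) - y‖ → ∃ i, v i = f)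
    (z : E) : ⨆ i, ‖v i - x₀‖ ≤ ⨆ i, ‖v i - z‖ := by
  refine ciSup_norm_sub_le_ciSup_norm_sub v
    (fun i ↦ norm_sub_le_of_stationary A B y hc hd hcoer hstat (hv i).1 (hv i).2)
    (hv_surj _ le_rfl le_rfl) (hv_surj _ ?_ (norm_map_sub_sub_eq_norm_map_add_sub B hB).le) z
  simpa only [sub_zero] using
    (norm_map_sub_sub_eq_norm_map_add_sub A (w := 0) (by simpa only [sub_zero])).le

end Lagrangian

theorem LinearMap.IsSymmetricProjection.inner_apply_apply {𝕜 E : Type*} [RCLike 𝕜]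
    [NormedAddCommGroup E] [InnerProductSpace 𝕜 E] {T : E →ₗ[𝕜] E}
    (hT : T.IsSymmetricProjection) (x y : E) : ⟪T x, T y⟫_𝕜 = ⟪T x, y⟫_𝕜 := by
  rw [← hT.isSymmetric, ← Module.End.mul_apply, hT.isIdempotentElem.eq]

namespace Matrix

variable {ι κ : Type*} [Fintype ι] [DecidableEq ι] [Fintype κ] [DecidableEq κ]

theorem toLp_mulVec {m n : Type*} [Fintype n] [DecidableEq n] (M : Matrix m n ℝ) (v : n → ℝ) :
    toLp 2 (M *ᵥ v) = toEuclideanLin M (toLp 2 v) :=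
  rfl

theorem isSymmetricProjection_toEuclideanLin {P : Matrix ι ι ℝ} (hP : P.IsSymm)
    (hPP : P * P = P) : (toEuclideanLin P).IsSymmetricProjection where
  isIdempotentElem := by rw [IsIdempotentElem, Module.End.mul_eq_comp, ← toLpLin_mul_same, hPP]
  isSymmetric := isSymmetric_toEuclideanLin_iff.2 (isHermitian_iff_isSymm.2 hP)

theorem toEuclideanLin_transpose (Λ : Matrix κ ι ℝ) :
    toEuclideanLin Λᵀ = (toEuclideanLin Λ).adjoint := by
  rw [← conjTranspose_eq_transpose_of_trivial, toEuclideanLin_conjTranspose_eq_adjoint]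

theorem norm_sq_le_of_posSemidef {P : Matrix ι ι ℝ} {Λ : Matrix κ ι ℝ}
    (hP : (toEuclideanLin P).IsSymmetricProjection) {c d : ℝ}
    (hpos : (c • P + d • (Λᵀ * Λ) - 1).PosSemidef) (g : EuclideanSpace ℝ ι) :
    ‖g‖ ^ 2 ≤ c * ‖toEuclideanLin P g‖ ^ 2 + d * ‖toEuclideanLin Λ g‖ ^ 2 := by
  have := (isPositive_toEuclideanLin_iff.2 hpos).inner_nonneg_left g
  simp only [map_sub, map_add, map_smul, toLpLin_mul_same, toLpLin_one, toEuclideanLin_transpose,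
    LinearMap.sub_apply, LinearMap.add_apply, LinearMap.smul_apply, LinearMap.comp_apply,
    LinearMap.id_apply, inner_sub_left, inner_add_left, real_inner_smul_left,
    LinearMap.adjoint_inner_left] at this
  rw [← hP.inner_apply_apply] at this
  simp only [real_inner_self_eq_norm_sq] at this
  linarith

theorem inner_toLp_eq_of_stationary {P : Matrix ι ι ℝ} {Λ : Matrix κ ι ℝ}
    (hP : (toEuclideanLin P).IsSymmetricProjection) {c d : ℝ} {f h : ι → ℝ} {y : κ → ℝ}
    (hb : c • (P *ᵥ f) + d • (Λᵀ *ᵥ (Λ *ᵥ f - y)) + (c • P + d • (Λᵀ * Λ)) *ᵥ h = h)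
    (g : EuclideanSpace ℝ ι) :
    ⟪toLp 2 h, g⟫_ℝ = c * ⟪toEuclideanLin P (toLp 2 f + toLp 2 h), toEuclideanLin P g⟫_ℝ +
      d * ⟪toEuclideanLin Λ (toLp 2 f + toLp 2 h) - toLp 2 y, toEuclideanLin Λ g⟫_ℝ := by
  have hvec : c • (P *ᵥ (f + h)) + d • (Λᵀ *ᵥ (Λ *ᵥ (f + h) - y)) = h := by
    convert hb using 1
    simp only [mulVec_add, mulVec_sub, add_mulVec, smul_mulVec, ← mulVec_mulVec, smul_add,
      smul_sub]
    abel
  conv_lhs => rw [← hvec]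
  rw [WithLp.toLp_add, WithLp.toLp_smul, WithLp.toLp_smul, toLp_mulVec, toLp_mulVec,
    WithLp.toLp_sub, toLp_mulVec, WithLp.toLp_add, inner_add_left, real_inner_smul_left, real_inner_smul_left,
    toEuclideanLin_transpose, LinearMap.adjoint_inner_left, hP.inner_apply_apply]

end Matrix

theorem eNorm_eq_norm_toLp {k : ℕ} (x : Fin k → ℝ) : eNorm x = ‖toLp 2 x‖ := by
  simp [eNorm, EuclideanSpace.norm_eq]

theorem norm_toLp_eq_of_eNorm_sq_eq {k : ℕ} {x : Fin k → ℝ} {r : ℝ} (hr : 0 ≤ r)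
    (hx : eNorm x ^ 2 = r ^ 2) : ‖toLp 2 x‖ = r := by
  rwa [eNorm_eq_norm_toLp, sq_eq_sq₀ (norm_nonneg _) hr] at hx

theorem eInner_eq_inner_toLp {k : ℕ} (x y : Fin k → ℝ) : eInner x y = ⟪toLp 2 x, toLp 2 y⟫_ℝ := by
  simp [eInner, EuclideanSpace.inner_toLp_toLp, dotProduct, mul_comm]

theorem sufficient_conditions_chebyshev_center_general {n m : ℕ}
    (P : Matrix (Fin n) (Fin n) ℝ) (Λ : Matrix (Fin m) (Fin n) ℝ)
    (hPsymm : P.IsSymm) (hPproj : P * P = P)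
    (ε η : ℝ) (hε : 0 < ε) (hη : 0 < η) (y : Fin m → ℝ)
    (K : Set (Fin n → ℝ))
    (hK : K = {f : Fin n → ℝ | eNorm (P *ᵥ f) ≤ ε ∧ eNorm (y - Λ *ᵥ f) ≤ η})
    (fs : Fin n → ℝ) (cs ds : ℝ) (hcs : 0 ≤ cs) (hds : 0 ≤ ds) (hs : Fin n → ℝ)
    -- (a)
    (ha : (cs • P + ds • (Λᵀ * Λ) - 1).PosSemidef)
    -- (b)
    (hb : cs • (P *ᵥ fs) + ds • (Λᵀ *ᵥ (Λ *ᵥ fs - y)) +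
        (cs • P + ds • (Λᵀ * Λ)) *ᵥ hs = hs)
    -- (c)
    (hc1 : eInner (P *ᵥ fs) hs = 0)
    (hc2 : eInner (Λᵀ *ᵥ (Λ *ᵥ fs - y)) hs = 0)
    -- (d)
    (hd1 : eNorm (P *ᵥ fs + P *ᵥ hs) ^ 2 = ε ^ 2)
    (hd2 : eNorm (Λ *ᵥ fs - y + Λ *ᵥ hs) ^ 2 = η ^ 2) :
    ∀ z : Fin n → ℝ,
      (⨆ f : K, eNorm ((f : Fin n → ℝ) - fs)) ≤ ⨆ f : K, eNorm ((f : Fin n → ℝ) - z) := by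
  intro z
  set A := toEuclideanLin P
  set B := toEuclideanLin Λ
  have hP := isSymmetricProjection_toEuclideanLin hPsymm hPproj
  have hAε : ‖A (toLp 2 fs + toLp 2 hs)‖ = ε := by
    simpa only [WithLp.toLp_add, toLp_mulVec, map_add] using
      norm_toLp_eq_of_eNorm_sq_eq hε.le hd1
  have hBη : ‖B (toLp 2 fs + toLp 2 hs) - toLp 2 y‖ = η := by
    simpa only [WithLp.toLp_add, WithLp.toLp_sub, toLp_mulVec, map_add, add_sub_right_comm] using
      norm_toLp_eq_of_eNorm_sq_eq hη.le hd2
  have hmem : ∀ f, f ∈ K ↔ ‖A (toLp 2 f)‖ ≤ ‖A (toLp 2 fs + toLp 2 hs)‖ ∧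
      ‖B (toLp 2 f) - toLp 2 y‖ ≤ ‖B (toLp 2 fs + toLp 2 hs) - toLp 2 y‖ := by
    intro f
    rw [hAε, hBη, hK, Set.mem_ofPred_eq, eNorm_eq_norm_toLp, eNorm_eq_norm_toLp, WithLp.toLp_sub,
      toLp_mulVec, toLp_mulVec, norm_sub_rev]
  have hAorth : ⟪A (toLp 2 fs), A (toLp 2 hs)⟫_ℝ = 0 := by
    rw [hP.inner_apply_apply, ← toLp_mulVec, ← eInner_eq_inner_toLp, hc1]
  have hBorth : ⟪B (toLp 2 fs) - toLp 2 y, B (toLp 2 hs)⟫_ℝ = 0 := by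
    rw [← LinearMap.adjoint_inner_left, ← toEuclideanLin_transpose, ← toLp_mulVec,
      ← WithLp.toLp_sub, ← toLp_mulVec, ← eInner_eq_inner_toLp, hc2]
  simpa only [eNorm_eq_norm_toLp, WithLp.toLp_sub] using
    ciSup_norm_sub_le_of_stationary A B (toLp 2 y) hcs hds (norm_sq_le_of_posSemidef hP ha)
      (inner_toLp_eq_of_stationary hP hb) hAorth hBorth (fun f : K ↦ toLp 2 (f : Fin n → ℝ))
      (fun f ↦ (hmem f).1 f.2)
      (fun f hfA hfB ↦ ⟨⟨WithLp.ofLp f, (hmem _).2 ⟨hfA, hfB⟩⟩, rfl⟩) (toLp 2 z)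

theorem sufficient_conditions_chebyshev_center {n m : ℕ}
    (P : Matrix (Fin n) (Fin n) ℝ) (Λ : Matrix (Fin m) (Fin n) ℝ)
    (hPsymm : P.IsSymm) (hPproj : P * P = P) (hΛ : Λ * Λᵀ = 1)
    (hker : ∀ f : Fin n → ℝ, P *ᵥ f = 0 → Λ *ᵥ f = 0 → f = 0)
    (ε η : ℝ) (hε : 0 < ε) (hη : 0 < η) (y : Fin m → ℝ)
    (K : Set (Fin n → ℝ))
    (hK : K = {f : Fin n → ℝ | eNorm (P *ᵥ f) ≤ ε ∧ eNorm (y - Λ *ᵥ f) ≤ η})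
    (fs : Fin n → ℝ) (cs ds : ℝ) (hcs : 0 ≤ cs) (hds : 0 ≤ ds) (hs : Fin n → ℝ)
    -- (a)
    (ha : (cs • P + ds • (Λᵀ * Λ) - 1).PosSemidef)
    -- (b)
    (hb : cs • (P *ᵥ fs) + ds • (Λᵀ *ᵥ (Λ *ᵥ fs - y)) +
        (cs • P + ds • (Λᵀ * Λ)) *ᵥ hs = hs)
    -- (c)
    (hc1 : eInner (P *ᵥ fs) hs = 0)
    (hc2 : eInner (Λᵀ *ᵥ (Λ *ᵥ fs - y)) hs = 0)
    -- (d)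
    (hd1 : eNorm (P *ᵥ fs + P *ᵥ hs) ^ 2 = ε ^ 2)
    (hd2 : eNorm (Λ *ᵥ fs - y + Λ *ᵥ hs) ^ 2 = η ^ 2) :
    ∀ z : Fin n → ℝ,
      (⨆ f : K, eNorm ((f : Fin n → ℝ) - fs)) ≤ ⨆ f : K, eNorm ((f : Fin n → ℝ) - z) :=
  sufficient_conditions_chebyshev_center_general P Λ hPsymm hPproj ε η hε hη y K hK fs cs ds hcs hds
    hs ha hb hc1 hc2 hd1 hd2
end
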